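/- Consider the SGD recursion θ_k − θ* = (I − αX_kX_kᵀ)(θ_{k−1} − θ*) − αε_k with i.i.d. data, where ‖X_k‖ ≤ c a.s., Φ = E[X_1X_1ᵀ] has λ_min(Φ) = a > 0, the noise ε_k is i.i.d., centered, independent of the past, bounded by ‖ε‖_∞, and α ∈ (0, 1/c²]. Then E[‖θ_k − θ*‖²]^{1/2} ≤ exp(−aαk/2)‖θ_0 − θ*‖ + ‖ε‖_∞ √(α/a). -/

import Mathlib

open MeasureTheory Matrix ProbabilityTheory

noncomputable def vnorm {d : ℕ} (v : Fin d → ℝ) : ℝ := Real.sqrt (∑ i, v i ^ 2)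

/-!
Write `θ_k - θ*` as a bias part (the recursion without noise, started at `θ_0 - θ*`) plus a
noise part (the recursion with noise, started at `0`). For `α ‖x‖² ≤ 1` the map `1 - α x xᵀ`
removes at least `α ⟪x, v⟫²` from `‖v‖²`; as `X_k` is independent of the current iterate and
`E[X_k X_kᵀ] ≥ a`, each step contracts the second moment by `1 - aα`. The noise part stays
centred, so its cross term with the fresh noise vanishes and its second moment never exceeds
the fixed point `α² ‖ε‖²_∞ / (aα)` of `u ↦ (1 - aα) u + α² ‖ε‖²_∞`. Minkowski's inequality in
`L²` adds the two bounds.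
-/

section Vnorm

variable {d : ℕ}

theorem vnorm_eq_norm_toLp (v : Fin d → ℝ) :
    vnorm v = ‖(WithLp.toLp 2 v : EuclideanSpace ℝ (Fin d))‖ := by
  simp [vnorm, EuclideanSpace.norm_eq]

theorem vnorm_nonneg (v : Fin d → ℝ) : 0 ≤ vnorm v := Real.sqrt_nonneg _

theorem vnorm_sq (v : Fin d → ℝ) : vnorm v ^ 2 = v ⬝ᵥ v := by
  rw [vnorm, Real.sq_sqrt (Finset.sum_nonneg fun i _ => sq_nonneg _)]
  simp [dotProduct, sq]

theorem vnorm_add_le (v w : Fin d → ℝ) : vnorm (v + w) ≤ vnorm v + vnorm w := by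
  simpa only [vnorm_eq_norm_toLp, WithLp.toLp_add] using norm_add_le _ _

theorem vnorm_sub_le (v w : Fin d → ℝ) : vnorm (v - w) ≤ vnorm v + vnorm w := by
  simpa only [vnorm_eq_norm_toLp, WithLp.toLp_sub] using norm_sub_le _ _

theorem vnorm_smul (t : ℝ) (v : Fin d → ℝ) : vnorm (t • v) = |t| * vnorm v := by
  simp only [vnorm_eq_norm_toLp, WithLp.toLp_smul, norm_smul, Real.norm_eq_abs]

theorem abs_apply_le_vnorm (v : Fin d → ℝ) (i : Fin d) : |v i| ≤ vnorm v := by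
  simpa [vnorm_eq_norm_toLp] using PiLp.norm_apply_le (WithLp.toLp 2 v) i

theorem norm_le_vnorm (v : Fin d → ℝ) : ‖v‖ ≤ vnorm v :=
  (pi_norm_le_iff_of_nonneg (vnorm_nonneg v)).2 fun i => abs_apply_le_vnorm v i

@[fun_prop]
theorem continuous_vnorm : Continuous (vnorm : (Fin d → ℝ) → ℝ) := by
  unfold vnorm; fun_prop

theorem vnorm_single_one (i : Fin d) : vnorm (Pi.single i 1) = 1 := by
  simp [vnorm, Pi.single_apply]

theorem vnorm_sub_smul_sq (u w : Fin d → ℝ) (t : ℝ) :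
    vnorm (u - t • w) ^ 2 = vnorm u ^ 2 - 2 * t * (u ⬝ᵥ w) + t ^ 2 * vnorm w ^ 2 := by
  simp only [vnorm_sq, sub_dotProduct, dotProduct_sub, smul_dotProduct, dotProduct_smul,
    smul_eq_mul, dotProduct_comm w u]
  ring

end Vnorm

section Step

variable {d : ℕ}

def sgdStep (α : ℝ) (x v : Fin d → ℝ) : Fin d → ℝ := v - (α * (x ⬝ᵥ v)) • x

theorem one_sub_smul_vecMulVec_mulVec (α : ℝ) (x v : Fin d → ℝ) :
    (1 - α • vecMulVec x x) *ᵥ v = sgdStep α x v := by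
  ext i
  simp [sgdStep, sub_mulVec, smul_mulVec, vecMulVec_mulVec]
  ring

theorem sgdStep_add (α : ℝ) (x v w : Fin d → ℝ) :
    sgdStep α x (v + w) = sgdStep α x v + sgdStep α x w := by
  simp only [sgdStep, dotProduct_add, mul_add, add_smul]
  abel

theorem sgdStep_dotProduct_comm (α : ℝ) (x v w : Fin d → ℝ) :
    sgdStep α x v ⬝ᵥ w = v ⬝ᵥ sgdStep α x w := by
  simp only [sgdStep, sub_dotProduct, dotProduct_sub, smul_dotProduct, dotProduct_smul,
    smul_eq_mul, dotProduct_comm x w, dotProduct_comm x v]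
  ring

@[fun_prop]
theorem Continuous.sgdStep {X : Type*} [TopologicalSpace X] {α : ℝ} {x v : X → Fin d → ℝ}
    (hx : Continuous x) (hv : Continuous v) : Continuous fun p => sgdStep α (x p) (v p) := by
  unfold _root_.sgdStep; fun_prop

theorem Measurable.sgdStep {X : Type*} {m : MeasurableSpace X} {α : ℝ} {x v : X → Fin d → ℝ}
    (hx : Measurable x) (hv : Measurable v) : Measurable fun p => sgdStep α (x p) (v p) :=
  (continuous_fst.sgdStep continuous_snd).measurable.comp (hx.prodMk hv)

theorem vnorm_sgdStep_sq_le {α c : ℝ} (hα : 0 ≤ α) (hαc : α * c ^ 2 ≤ 1) {x : Fin d → ℝ}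
    (hx : vnorm x ≤ c) (v : Fin d → ℝ) :
    vnorm (sgdStep α x v) ^ 2 ≤ vnorm v ^ 2 - α * (x ⬝ᵥ v) ^ 2 := by
  have hxx : α * (x ⬝ᵥ x) ≤ 1 := by
    rw [← vnorm_sq]
    nlinarith [pow_le_pow_left₀ (vnorm_nonneg x) hx 2]
  have expand : vnorm (sgdStep α x v) ^ 2
      = vnorm v ^ 2 - 2 * α * (x ⬝ᵥ v) ^ 2 + α * (x ⬝ᵥ v) ^ 2 * (α * (x ⬝ᵥ x)) := by
    simp only [vnorm_sq, sgdStep, sub_dotProduct, dotProduct_sub, smul_dotProduct,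
      dotProduct_smul, smul_eq_mul, dotProduct_comm v x]
    ring
  rw [expand]
  nlinarith [mul_nonneg hα (sq_nonneg (x ⬝ᵥ v))]

theorem vnorm_sgdStep_le {α c : ℝ} (hα : 0 ≤ α) (hαc : α * c ^ 2 ≤ 1) {x : Fin d → ℝ}
    (hx : vnorm x ≤ c) (v : Fin d → ℝ) : vnorm (sgdStep α x v) ≤ vnorm v := by
  refine (sq_le_sq₀ (vnorm_nonneg _) (vnorm_nonneg _)).1 ?_
  nlinarith [vnorm_sgdStep_sq_le hα hαc hx v, mul_nonneg hα (sq_nonneg (x ⬝ᵥ v))]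

end Step

section Integrability

variable {Ω : Type*} [MeasurableSpace Ω] {μ : Measure Ω} [IsFiniteMeasure μ]

theorem Continuous.integrable_comp_of_ae_norm_le {E : Type*} [NormedAddCommGroup E]
    [ProperSpace E] {g : E → ℝ} (hg : Continuous g) {Y : Ω → E}
    (hY : AEStronglyMeasurable Y μ) {C : ℝ} (hC : ∀ᵐ ω ∂μ, ‖Y ω‖ ≤ C) :
    Integrable (fun ω => g (Y ω)) μ := by
  obtain ⟨M, hM⟩ := (isCompact_closedBall (0 : E) C).exists_bound_of_continuousOn hg.continuousOn
  refine Integrable.of_bound (hg.comp_aestronglyMeasurable hY) M ?_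
  filter_upwards [hC] with ω hω using hM _ (mem_closedBall_zero_iff.2 hω)

variable {d : ℕ} {V W : Ω → Fin d → ℝ} {C C' : ℝ}

theorem Continuous.integrable_comp_of_ae_vnorm_le {g : (Fin d → ℝ) → ℝ} (hg : Continuous g)
    (hV : Measurable V) (hVb : ∀ᵐ ω ∂μ, vnorm (V ω) ≤ C) : Integrable (fun ω => g (V ω)) μ :=
  hg.integrable_comp_of_ae_norm_le hV.aestronglyMeasurable <| by
    filter_upwards [hVb] with ω h using (norm_le_vnorm _).trans h

theorem Continuous.integrable_comp_prodMk_of_ae_vnorm_le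
    {g : (Fin d → ℝ) × (Fin d → ℝ) → ℝ} (hg : Continuous g)
    (hV : Measurable V) (hW : Measurable W) (hVb : ∀ᵐ ω ∂μ, vnorm (V ω) ≤ C)
    (hWb : ∀ᵐ ω ∂μ, vnorm (W ω) ≤ C') : Integrable (fun ω => g (V ω, W ω)) μ := by
  refine hg.integrable_comp_of_ae_norm_le (hV.prodMk hW).aestronglyMeasurable
    (C := max C C') ?_
  filter_upwards [hVb, hWb] with ω h h'
  exact norm_prod_le_iff.2 ⟨(norm_le_vnorm _).trans (h.trans (le_max_left _ _)),
    (norm_le_vnorm _).trans (h'.trans (le_max_right _ _))⟩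

end Integrability

section Moments

variable {d : ℕ} {Ω : Type*} [MeasurableSpace Ω] {μ : Measure Ω} [IsProbabilityMeasure μ]
  {V W x : Ω → Fin d → ℝ} {C C' : ℝ}

theorem integral_dotProduct_eq_zero_of_indepFun (hVW : IndepFun V W μ) (hV : Measurable V)
    (hW : Measurable W) (hVb : ∀ᵐ ω ∂μ, vnorm (V ω) ≤ C) (hWb : ∀ᵐ ω ∂μ, vnorm (W ω) ≤ C')
    (hV0 : ∀ i, ∫ ω, V ω i ∂μ = 0) : ∫ ω, V ω ⬝ᵥ W ω ∂μ = 0 := by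
  have hint : ∀ i, Integrable (fun ω => V ω i * W ω i) μ := fun i =>
    (show Continuous fun p : (Fin d → ℝ) × (Fin d → ℝ) => p.1 i * p.2 i by fun_prop)
      |>.integrable_comp_prodMk_of_ae_vnorm_le hV hW hVb hWb
  simp only [dotProduct]
  rw [integral_finsetSum _ fun i _ => hint i]
  refine Finset.sum_eq_zero fun i _ => ?_
  rw [hVW.integral_fun_comp_mul_comp (f := fun v => v i) (g := fun w => w i)
    hV.aemeasurable hW.aemeasurable (continuous_apply i).aestronglyMeasurable
    (continuous_apply i).aestronglyMeasurable, hV0 i, zero_mul]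

theorem integral_sq_dotProduct_eq_of_indepFun {Φ : Matrix (Fin d) (Fin d) ℝ}
    (hVx : IndepFun V x μ) (hV : Measurable V) (hx : Measurable x)
    (hVb : ∀ᵐ ω ∂μ, vnorm (V ω) ≤ C) (hxb : ∀ᵐ ω ∂μ, vnorm (x ω) ≤ C')
    (hΦ : ∀ i j, ∫ ω, x ω i * x ω j ∂μ = Φ i j) :
    ∫ ω, (x ω ⬝ᵥ V ω) ^ 2 ∂μ = ∫ ω, V ω ⬝ᵥ Φ *ᵥ V ω ∂μ := by
  have hsq : ∀ v y : Fin d → ℝ, (y ⬝ᵥ v) ^ 2 = ∑ i, ∑ j, v i * v j * (y i * y j) := by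
    intro v y
    simp only [dotProduct, sq, Finset.sum_mul_sum]
    exact Finset.sum_congr rfl fun i _ => Finset.sum_congr rfl fun j _ => by ring
  have hquad : ∀ v : Fin d → ℝ, v ⬝ᵥ Φ *ᵥ v = ∑ i, ∑ j, v i * v j * Φ i j := by
    intro v
    simp only [dotProduct, mulVec, Finset.mul_sum]
    exact Finset.sum_congr rfl fun i _ => Finset.sum_congr rfl fun j _ => by ring
  have hint : ∀ g : (Fin d → ℝ) × (Fin d → ℝ) → ℝ, Continuous g →
      Integrable (fun ω => g (V ω, x ω)) μ := fun g hg =>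
    hg.integrable_comp_prodMk_of_ae_vnorm_le hV hx hVb hxb
  have hx4 : ∀ i j, Integrable (fun ω => V ω i * V ω j * (x ω i * x ω j)) μ := fun i j =>
    hint (fun p => p.1 i * p.1 j * (p.2 i * p.2 j)) (by fun_prop)
  have hV2 : ∀ i j, Integrable (fun ω => V ω i * V ω j * Φ i j) μ := fun i j =>
    hint (fun p => p.1 i * p.1 j * Φ i j) (by fun_prop)
  simp only [hsq, hquad]
  rw [integral_finsetSum _ fun i _ => integrable_finsetSum _ fun j _ => hx4 i j,
    integral_finsetSum _ fun i _ => integrable_finsetSum _ fun j _ => hV2 i j]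
  refine Finset.sum_congr rfl fun i _ => ?_
  rw [integral_finsetSum _ fun j _ => hx4 i j, integral_finsetSum _ fun j _ => hV2 i j]
  refine Finset.sum_congr rfl fun j _ => ?_
  have hij : ∫ ω, V ω i * V ω j * (x ω i * x ω j) ∂μ
      = (∫ ω, V ω i * V ω j ∂μ) * ∫ ω, x ω i * x ω j ∂μ :=
    hVx.integral_fun_comp_mul_comp (f := fun v => v i * v j) (g := fun y => y i * y j)
      hV.aemeasurable hx.aemeasurable (by fun_prop : Continuous _).aestronglyMeasurable
      (by fun_prop : Continuous _).aestronglyMeasurable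
  rw [hij, integral_mul_const, hΦ i j]

end Moments

section StepMoments

variable {d : ℕ} {Ω : Type*} [MeasurableSpace Ω] {μ : Measure Ω} [IsProbabilityMeasure μ]
  {V x e : Ω → Fin d → ℝ} {C c Ce a α : ℝ} {Φ : Matrix (Fin d) (Fin d) ℝ}

theorem integral_vnorm_sq_sgdStep_le (hα : 0 ≤ α) (hαc : α * c ^ 2 ≤ 1)
    (hmin : ∀ u : Fin d → ℝ, a * vnorm u ^ 2 ≤ u ⬝ᵥ Φ *ᵥ u)
    (hVx : IndepFun V x μ) (hV : Measurable V) (hx : Measurable x)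
    (hVb : ∀ᵐ ω ∂μ, vnorm (V ω) ≤ C) (hxb : ∀ᵐ ω ∂μ, vnorm (x ω) ≤ c)
    (hΦ : ∀ i j, ∫ ω, x ω i * x ω j ∂μ = Φ i j) :
    ∫ ω, vnorm (sgdStep α (x ω) (V ω)) ^ 2 ∂μ ≤ (1 - a * α) * ∫ ω, vnorm (V ω) ^ 2 ∂μ := by
  have hint : ∀ g : (Fin d → ℝ) × (Fin d → ℝ) → ℝ, Continuous g →
      Integrable (fun ω => g (V ω, x ω)) μ := fun g hg =>
    hg.integrable_comp_prodMk_of_ae_vnorm_le hV hx hVb hxb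
  have hV2 : Integrable (fun ω => vnorm (V ω) ^ 2) μ :=
    hint (fun p => vnorm p.1 ^ 2) (by fun_prop)
  have hxV : Integrable (fun ω => (x ω ⬝ᵥ V ω) ^ 2) μ :=
    hint (fun p => (p.2 ⬝ᵥ p.1) ^ 2) (by fun_prop)
  have hlower : a * ∫ ω, vnorm (V ω) ^ 2 ∂μ ≤ ∫ ω, (x ω ⬝ᵥ V ω) ^ 2 ∂μ := by
    rw [integral_sq_dotProduct_eq_of_indepFun hVx hV hx hVb hxb hΦ, ← integral_const_mul]
    exact integral_mono (hV2.const_mul a) (hint (fun p => p.1 ⬝ᵥ Φ *ᵥ p.1) (by fun_prop))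
      fun ω => hmin (V ω)
  calc ∫ ω, vnorm (sgdStep α (x ω) (V ω)) ^ 2 ∂μ
      ≤ ∫ ω, (vnorm (V ω) ^ 2 - α * (x ω ⬝ᵥ V ω) ^ 2) ∂μ := by
        refine integral_mono_ae (hint (fun p => vnorm (sgdStep α p.2 p.1) ^ 2) (by fun_prop))
          (hV2.sub (hxV.const_mul α)) ?_
        filter_upwards [hxb] with ω hω using vnorm_sgdStep_sq_le hα hαc hω (V ω)
    _ = ∫ ω, vnorm (V ω) ^ 2 ∂μ - α * ∫ ω, (x ω ⬝ᵥ V ω) ^ 2 ∂μ := by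
        rw [integral_sub hV2 (hxV.const_mul α), integral_const_mul]
    _ ≤ (1 - a * α) * ∫ ω, vnorm (V ω) ^ 2 ∂μ := by nlinarith

theorem integral_dotProduct_sgdStep_eq_zero (hα : 0 ≤ α) (hαc : α * c ^ 2 ≤ 1)
    (hind : IndepFun V (fun ω => (x ω, e ω)) μ) (hV : Measurable V) (hx : Measurable x)
    (he : Measurable e) (hVb : ∀ᵐ ω ∂μ, vnorm (V ω) ≤ C) (hxb : ∀ᵐ ω ∂μ, vnorm (x ω) ≤ c)
    (heb : ∀ᵐ ω ∂μ, vnorm (e ω) ≤ Ce) (hV0 : ∀ i, ∫ ω, V ω i ∂μ = 0) :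
    ∫ ω, V ω ⬝ᵥ sgdStep α (x ω) (e ω) ∂μ = 0 := by
  refine integral_dotProduct_eq_zero_of_indepFun (C' := Ce)
    (hind.comp measurable_id (measurable_fst.sgdStep measurable_snd)) hV (hx.sgdStep he) hVb
    ?_ hV0
  filter_upwards [hxb, heb] with ω hxω heω using (vnorm_sgdStep_le hα hαc hxω _).trans heω

theorem integral_sgdStep_sub_smul_apply_eq_zero (hα : 0 ≤ α) (hαc : α * c ^ 2 ≤ 1)
    (hind : IndepFun V (fun ω => (x ω, e ω)) μ) (hV : Measurable V) (hx : Measurable x)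
    (he : Measurable e) (hVb : ∀ᵐ ω ∂μ, vnorm (V ω) ≤ C) (hxb : ∀ᵐ ω ∂μ, vnorm (x ω) ≤ c)
    (heb : ∀ᵐ ω ∂μ, vnorm (e ω) ≤ Ce) (hV0 : ∀ i, ∫ ω, V ω i ∂μ = 0)
    (he0 : ∀ i, ∫ ω, e ω i ∂μ = 0) (i : Fin d) :
    ∫ ω, (sgdStep α (x ω) (V ω) - α • e ω) i ∂μ = 0 := by
  have hcoord : ∀ ω, (sgdStep α (x ω) (V ω) - α • e ω) i
      = V ω ⬝ᵥ sgdStep α (x ω) (Pi.single i 1) - α * e ω i := fun ω => by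
    rw [← sgdStep_dotProduct_comm, dotProduct_single_one]; rfl
  have hcross : ∫ ω, V ω ⬝ᵥ sgdStep α (x ω) (Pi.single i 1) ∂μ = 0 :=
    integral_dotProduct_sgdStep_eq_zero hα hαc
      (hind.comp measurable_id (measurable_fst.prodMk measurable_const)) hV hx measurable_const
      hVb hxb (ae_of_all _ fun _ => (vnorm_single_one i).le) hV0
  have hint : Integrable (fun ω => V ω ⬝ᵥ sgdStep α (x ω) (Pi.single i 1)) μ :=
    (show Continuous fun p : (Fin d → ℝ) × (Fin d → ℝ) => p.1 ⬝ᵥ sgdStep α p.2 (Pi.single i 1)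
      by fun_prop).integrable_comp_prodMk_of_ae_vnorm_le hV hx hVb hxb
  simp only [hcoord]
  have hei : Integrable (fun ω => e ω i) μ :=
    (continuous_apply i).integrable_comp_of_ae_vnorm_le he heb
  rw [integral_sub hint (hei.const_mul α), integral_const_mul, hcross, he0 i, mul_zero, sub_zero]

theorem integral_vnorm_sq_sgdStep_sub_smul_le (hα : 0 ≤ α) (hαc : α * c ^ 2 ≤ 1)
    (hmin : ∀ u : Fin d → ℝ, a * vnorm u ^ 2 ≤ u ⬝ᵥ Φ *ᵥ u)
    (hind : IndepFun V (fun ω => (x ω, e ω)) μ) (hV : Measurable V) (hx : Measurable x)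
    (he : Measurable e) (hVb : ∀ᵐ ω ∂μ, vnorm (V ω) ≤ C) (hxb : ∀ᵐ ω ∂μ, vnorm (x ω) ≤ c)
    (heb : ∀ᵐ ω ∂μ, vnorm (e ω) ≤ Ce) (hΦ : ∀ i j, ∫ ω, x ω i * x ω j ∂μ = Φ i j)
    (hV0 : ∀ i, ∫ ω, V ω i ∂μ = 0) :
    ∫ ω, vnorm (sgdStep α (x ω) (V ω) - α • e ω) ^ 2 ∂μ
      ≤ (1 - a * α) * ∫ ω, vnorm (V ω) ^ 2 ∂μ + α ^ 2 * Ce ^ 2 := by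
  have hW : ∀ᵐ ω ∂μ, vnorm (sgdStep α (x ω) (e ω)) ≤ Ce := by
    filter_upwards [hxb, heb] with ω hxω heω using (vnorm_sgdStep_le hα hαc hxω _).trans heω
  have hTV2 : Integrable (fun ω => vnorm (sgdStep α (x ω) (V ω)) ^ 2) μ :=
    (show Continuous fun p : (Fin d → ℝ) × (Fin d → ℝ) => vnorm (sgdStep α p.2 p.1) ^ 2
      by fun_prop).integrable_comp_prodMk_of_ae_vnorm_le hV hx hVb hxb
  have hcross : Integrable (fun ω => V ω ⬝ᵥ sgdStep α (x ω) (e ω)) μ :=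
    (show Continuous fun p : (Fin d → ℝ) × (Fin d → ℝ) => p.1 ⬝ᵥ p.2 by fun_prop)
      |>.integrable_comp_prodMk_of_ae_vnorm_le hV (hx.sgdStep he) hVb hW
  have he2 : Integrable (fun ω => vnorm (e ω) ^ 2) μ :=
    (show Continuous fun v : Fin d → ℝ => vnorm v ^ 2 by fun_prop)
      |>.integrable_comp_of_ae_vnorm_le he heb
  -- `1 - α x xᵀ` is symmetric, so the cross term pairs `V` with a function of `(x, e)`.
  have hexpand : ∀ ω, vnorm (sgdStep α (x ω) (V ω) - α • e ω) ^ 2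
      = vnorm (sgdStep α (x ω) (V ω)) ^ 2 - 2 * α * (V ω ⬝ᵥ sgdStep α (x ω) (e ω))
        + α ^ 2 * vnorm (e ω) ^ 2 := fun ω => by
    rw [vnorm_sub_smul_sq, sgdStep_dotProduct_comm]
  have hnoise : ∫ ω, vnorm (e ω) ^ 2 ∂μ ≤ Ce ^ 2 := by
    refine (integral_mono_ae he2 (integrable_const (Ce ^ 2)) ?_).trans (by simp)
    filter_upwards [heb] with ω h using pow_le_pow_left₀ (vnorm_nonneg _) h 2
  simp only [hexpand]
  rw [integral_add (by exact hTV2.sub (hcross.const_mul _)) (he2.const_mul _),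
    integral_sub hTV2 (hcross.const_mul _), integral_const_mul, integral_const_mul,
    integral_dotProduct_sgdStep_eq_zero hα hαc hind hV hx he hVb hxb heb hV0, mul_zero, sub_zero]
  exact add_le_add (integral_vnorm_sq_sgdStep_le hα hαc hmin
    (hind.comp measurable_id measurable_fst) hV hx hVb hxb hΦ)
    (mul_le_mul_of_nonneg_left hnoise (sq_nonneg α))

end StepMoments

section Minkowski

variable {Ω : Type*} [MeasurableSpace Ω] {μ : Measure Ω}

theorem ofReal_sqrt_integral_sq_eq_eLpNorm {f : Ω → ℝ} (hf : MemLp f 2 μ) :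
    ENNReal.ofReal √(∫ ω, f ω ^ 2 ∂μ) = eLpNorm f 2 μ := by
  rw [hf.eLpNorm_eq_integral_rpow_norm two_ne_zero ENNReal.ofNat_ne_top, Real.sqrt_eq_rpow]
  simp [one_div]

theorem sqrt_integral_add_sq_le {f g : Ω → ℝ} (hf : MemLp f 2 μ) (hg : MemLp g 2 μ) :
    √(∫ ω, (f ω + g ω) ^ 2 ∂μ) ≤ √(∫ ω, f ω ^ 2 ∂μ) + √(∫ ω, g ω ^ 2 ∂μ) := by
  rw [← ENNReal.ofReal_le_ofReal_iff (by positivity), ENNReal.ofReal_add (by positivity)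
    (by positivity), ofReal_sqrt_integral_sq_eq_eLpNorm hf, ofReal_sqrt_integral_sq_eq_eLpNorm hg]
  exact (ofReal_sqrt_integral_sq_eq_eLpNorm (hf.add hg)).trans_le
    (eLpNorm_add_le hf.1 hg.1 one_le_two)

theorem sqrt_integral_vnorm_add_sq_le [IsFiniteMeasure μ] {d : ℕ} {V W : Ω → Fin d → ℝ}
    {C C' : ℝ} (hV : Measurable V) (hW : Measurable W) (hVb : ∀ᵐ ω ∂μ, vnorm (V ω) ≤ C)
    (hWb : ∀ᵐ ω ∂μ, vnorm (W ω) ≤ C') :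
    √(∫ ω, vnorm (V ω + W ω) ^ 2 ∂μ)
      ≤ √(∫ ω, vnorm (V ω) ^ 2 ∂μ) + √(∫ ω, vnorm (W ω) ^ 2 ∂μ) := by
  have hmem : ∀ {U : Ω → Fin d → ℝ} {C : ℝ}, Measurable U → (∀ᵐ ω ∂μ, vnorm (U ω) ≤ C) →
      MemLp (fun ω => vnorm (U ω)) 2 μ := fun hU hUb =>
    MemLp.of_bound (continuous_vnorm.measurable.comp hU).aestronglyMeasurable _ <| by
      filter_upwards [hUb] with ω h using (Real.norm_of_nonneg (vnorm_nonneg _)).trans_le h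
  refine (Real.sqrt_le_sqrt (integral_mono ?_ ?_ fun ω => pow_le_pow_left₀ (vnorm_nonneg _)
    (vnorm_add_le (V ω) (W ω)) 2)).trans (sqrt_integral_add_sq_le (hmem hV hVb) (hmem hW hWb))
  · exact (show Continuous fun p : (Fin d → ℝ) × (Fin d → ℝ) => vnorm (p.1 + p.2) ^ 2
      by fun_prop).integrable_comp_prodMk_of_ae_vnorm_le hV hW hVb hWb
  · exact (show Continuous fun p : (Fin d → ℝ) × (Fin d → ℝ) => (vnorm p.1 + vnorm p.2) ^ 2
      by fun_prop).integrable_comp_prodMk_of_ae_vnorm_le hV hW hVb hWb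

end Minkowski

theorem ProbabilityTheory.iIndepFun.indepFun_succ_of_measurable_natural {Ω β γ : Type*}
    [MeasurableSpace Ω] {μ : Measure Ω} [NormedAddCommGroup β] [MeasurableSpace β] [BorelSpace β]
    [MeasurableSpace γ] {Z : ℕ → Ω → β} (hZ : ∀ k, StronglyMeasurable (Z k))
    (hind : iIndepFun Z μ) {k : ℕ} {V : Ω → γ}
    (hV : Measurable[Filtration.natural Z hZ k] V) : IndepFun V (Z (k + 1)) μ :=
  (IndepFun_iff_Indep _ _ _).2 <|
    indep_of_indep_of_le_left (hind.indep_comap_natural_of_lt hZ k.lt_succ_self).symm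
      hV.comap_le

section Iterate

variable {d : ℕ} {Ω : Type*} {α : ℝ} {X ε : ℕ → Ω → Fin d → ℝ} {v₀ : Fin d → ℝ}

def sgdIterate (α : ℝ) (X ε : ℕ → Ω → Fin d → ℝ) (v₀ : Fin d → ℝ) : ℕ → Ω → Fin d → ℝ
  | 0 => fun _ => v₀
  | k + 1 => fun ω => sgdStep α (X (k + 1) ω) (sgdIterate α X ε v₀ k ω) - α • ε (k + 1) ω

theorem sgdIterate_eq_add (k : ℕ) (ω : Ω) :
    sgdIterate α X ε v₀ k ω = sgdIterate α X 0 v₀ k ω + sgdIterate α X ε 0 k ω := by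
  induction k with
  | zero => simp [sgdIterate]
  | succ k ih =>
    simp only [sgdIterate, ih, sgdStep_add, Pi.zero_apply, smul_zero, sub_zero]
    abel

theorem measurable_sgdIterate {ℱ : ℕ → MeasurableSpace Ω} (hℱ : Monotone ℱ)
    (hX : ∀ k, Measurable[ℱ k] (X k)) (hε : ∀ k, Measurable[ℱ k] (ε k)) (k : ℕ) :
    Measurable[ℱ k] (sgdIterate α X ε v₀ k) := by
  induction k with
  | zero => exact measurable_const
  | succ k ih =>
    exact ((hX _).sgdStep (ih.mono (hℱ k.le_succ) le_rfl)).sub ((hε _).const_smul α)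

theorem ae_vnorm_sgdIterate_le [MeasurableSpace Ω] {μ : Measure Ω} {c Ce : ℝ} (hα : 0 ≤ α)
    (hαc : α * c ^ 2 ≤ 1) (hXb : ∀ k, ∀ᵐ ω ∂μ, vnorm (X k ω) ≤ c)
    (hεb : ∀ k, ∀ᵐ ω ∂μ, vnorm (ε k ω) ≤ Ce) (k : ℕ) :
    ∀ᵐ ω ∂μ, vnorm (sgdIterate α X ε v₀ k ω) ≤ vnorm v₀ + k * (α * Ce) := by
  induction k with
  | zero => simp [sgdIterate]
  | succ k ih =>
    filter_upwards [ih, hXb (k + 1), hεb (k + 1)] with ω hV hx he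
    calc vnorm (sgdIterate α X ε v₀ (k + 1) ω)
        ≤ vnorm (sgdStep α (X (k + 1) ω) (sgdIterate α X ε v₀ k ω)) + α * vnorm (ε (k + 1) ω) :=
          (vnorm_sub_le _ _).trans_eq (by rw [vnorm_smul, abs_of_nonneg hα])
      _ ≤ vnorm v₀ + k * (α * Ce) + α * Ce := by
          gcongr
          exact (vnorm_sgdStep_le hα hαc hx _).trans hV
      _ = vnorm v₀ + (k + 1 : ℕ) * (α * Ce) := by push_cast; ring

theorem sub_eq_sgdIterate {θ : ℕ → Ω → Fin d → ℝ} {θstar : Fin d → ℝ}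
    (hθ0 : ∀ ω, θ 0 ω = v₀ + θstar)
    (hrec : ∀ k ω, θ (k + 1) ω - θstar
      = (1 - α • vecMulVec (X (k + 1) ω) (X (k + 1) ω)) *ᵥ (θ k ω - θstar) - α • ε (k + 1) ω)
    (k : ℕ) (ω : Ω) : θ k ω - θstar = sgdIterate α X ε v₀ k ω := by
  induction k with
  | zero => simp [sgdIterate, hθ0]
  | succ k ih => rw [hrec, ih, one_sub_smul_vecMulVec_mulVec]; rfl

section Independence

variable [MeasurableSpace Ω] {μ : Measure Ω}

theorem indepFun_sgdIterate (hX : ∀ k, Measurable (X k)) (hε : ∀ k, Measurable (ε k))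
    (hind : iIndepFun (fun k ω => (X k ω, ε k ω)) μ) {ε' : ℕ → Ω → Fin d → ℝ}
    (hε' : ε' = 0 ∨ ε' = ε) (k : ℕ) :
    IndepFun (sgdIterate α X ε' v₀ k) (fun ω => (X (k + 1) ω, ε (k + 1) ω)) μ := by
  have hZ : ∀ k, StronglyMeasurable fun ω => (X k ω, ε k ω) := fun k =>
    ((hX k).prodMk (hε k)).stronglyMeasurable
  have hZℱ : ∀ k, Measurable[Filtration.natural _ hZ k] fun ω => (X k ω, ε k ω) := fun k =>
    (Filtration.stronglyAdapted_natural hZ k).measurable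
  refine hind.indepFun_succ_of_measurable_natural hZ <|
    measurable_sgdIterate (Filtration.natural _ hZ).mono' (fun k => (hZℱ k).fst) ?_ k
  rcases hε' with rfl | rfl
  · exact fun _ => measurable_const
  · exact fun k => (hZℱ k).snd

end Independence

end Iterate

theorem le_exp_neg_mul_of_le_one_sub_mul {u : ℕ → ℝ} {r : ℝ} (hu : ∀ k, 0 ≤ u k)
    (h : ∀ k, u (k + 1) ≤ (1 - r) * u k) (k : ℕ) : u k ≤ Real.exp (-(r * k)) * u 0 := by
  induction k with
  | zero => simp
  | succ k ih =>
    calc u (k + 1) ≤ (1 - r) * u k := h k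
      _ ≤ Real.exp (-r) * (Real.exp (-(r * k)) * u 0) := by
        gcongr
        · exact hu k
        · linarith [Real.add_one_le_exp (-r)]
      _ = Real.exp (-(r * (k + 1 : ℕ))) * u 0 := by
        rw [← mul_assoc, ← Real.exp_add]; push_cast; ring_nf

theorem le_div_of_le_one_sub_mul_add {u : ℕ → ℝ} {r s : ℝ} (hr : 0 < r) (hr1 : r ≤ 1)
    (h0 : u 0 ≤ s / r) (h : ∀ k, u (k + 1) ≤ (1 - r) * u k + s) (k : ℕ) : u k ≤ s / r := by
  induction k with
  | zero => exact h0
  | succ k ih =>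
    calc u (k + 1) ≤ (1 - r) * u k + s := h k
      _ ≤ (1 - r) * (s / r) + s := by gcongr
      _ = s / r := by field_simp; ring

theorem le_sq_of_forall_mul_vnorm_sq_le {d : ℕ} {Ω : Type*} [MeasurableSpace Ω] {μ : Measure Ω}
    [IsProbabilityMeasure μ] {x : Ω → Fin d → ℝ} {a c : ℝ} {Φ : Matrix (Fin d) (Fin d) ℝ}
    (i : Fin d) (hmin : ∀ u : Fin d → ℝ, a * vnorm u ^ 2 ≤ u ⬝ᵥ Φ *ᵥ u) (hx : Measurable x)
    (hxb : ∀ᵐ ω ∂μ, vnorm (x ω) ≤ c) (hΦ : ∀ i j, ∫ ω, x ω i * x ω j ∂μ = Φ i j) :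
    a ≤ c ^ 2 := by
  have hai : a ≤ Φ i i := by simpa [vnorm_single_one] using hmin (Pi.single i 1)
  refine hai.trans ((hΦ i i).symm.trans_le <|
    (integral_mono_ae ?_ (integrable_const (c ^ 2)) ?_).trans (by simp))
  · exact (show Continuous fun v : Fin d → ℝ => v i * v i by fun_prop)
      |>.integrable_comp_of_ae_vnorm_le hx hxb
  · filter_upwards [hxb] with ω h
    rw [← abs_mul_abs_self, ← sq]
    exact pow_le_pow_left₀ (abs_nonneg _) ((abs_apply_le_vnorm _ i).trans h) 2

section SecondMoments

variable {d : ℕ} {Ω : Type*} [MeasurableSpace Ω] {μ : Measure Ω} [IsProbabilityMeasure μ]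
  {X ε : ℕ → Ω → Fin d → ℝ} {a α c Ce : ℝ} {Φ : Matrix (Fin d) (Fin d) ℝ}

theorem integral_vnorm_sq_sgdIterate_bias_le (hα : 0 ≤ α) (hαc : α * c ^ 2 ≤ 1)
    (hmin : ∀ u : Fin d → ℝ, a * vnorm u ^ 2 ≤ u ⬝ᵥ Φ *ᵥ u)
    (hX : ∀ k, Measurable (X k)) (hε : ∀ k, Measurable (ε k))
    (hind : iIndepFun (fun k ω => (X k ω, ε k ω)) μ) (hXb : ∀ k, ∀ᵐ ω ∂μ, vnorm (X k ω) ≤ c)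
    (hΦ : ∀ k i j, ∫ ω, X (k + 1) ω i * X (k + 1) ω j ∂μ = Φ i j) (v₀ : Fin d → ℝ) (k : ℕ) :
    ∫ ω, vnorm (sgdIterate α X 0 v₀ k ω) ^ 2 ∂μ ≤ Real.exp (-(a * α * k)) * vnorm v₀ ^ 2 := by
  have hD : ∀ k, Measurable (sgdIterate α X 0 v₀ k) :=
    measurable_sgdIterate monotone_const hX fun _ => measurable_const
  have hDb : ∀ k, ∀ᵐ ω ∂μ, vnorm (sgdIterate α X 0 v₀ k ω) ≤ vnorm v₀ + k * (α * 0) :=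
    ae_vnorm_sgdIterate_le hα hαc hXb fun _ => ae_of_all _ fun _ => by simp [vnorm]
  have hstep : ∀ k, ∫ ω, vnorm (sgdIterate α X 0 v₀ (k + 1) ω) ^ 2 ∂μ
      ≤ (1 - a * α) * ∫ ω, vnorm (sgdIterate α X 0 v₀ k ω) ^ 2 ∂μ := fun k => by
    simpa [sgdIterate] using integral_vnorm_sq_sgdStep_le hα hαc hmin
      ((indepFun_sgdIterate hX hε hind (Or.inl rfl) k).comp measurable_id measurable_fst)
      (hD k) (hX (k + 1)) (hDb k) (hXb (k + 1)) (hΦ k)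
  simpa [sgdIterate] using
    le_exp_neg_mul_of_le_one_sub_mul (u := fun k => ∫ ω, vnorm (sgdIterate α X 0 v₀ k ω) ^ 2 ∂μ)
      (fun k => integral_nonneg fun _ => sq_nonneg _) hstep k

theorem integral_vnorm_sq_sgdIterate_noise_le (ha : 0 < a) (hα : 0 < α) (haα : a * α ≤ 1)
    (hαc : α * c ^ 2 ≤ 1) (hmin : ∀ u : Fin d → ℝ, a * vnorm u ^ 2 ≤ u ⬝ᵥ Φ *ᵥ u)
    (hX : ∀ k, Measurable (X k)) (hε : ∀ k, Measurable (ε k))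
    (hind : iIndepFun (fun k ω => (X k ω, ε k ω)) μ) (hXb : ∀ k, ∀ᵐ ω ∂μ, vnorm (X k ω) ≤ c)
    (hεb : ∀ k, ∀ᵐ ω ∂μ, vnorm (ε k ω) ≤ Ce) (hε0 : ∀ k i, ∫ ω, ε k ω i ∂μ = 0)
    (hΦ : ∀ k i j, ∫ ω, X (k + 1) ω i * X (k + 1) ω j ∂μ = Φ i j) (k : ℕ) :
    ∫ ω, vnorm (sgdIterate α X ε 0 k ω) ^ 2 ∂μ ≤ Ce ^ 2 * (α / a) := by
  have hN : ∀ k, Measurable (sgdIterate α X ε 0 k) := measurable_sgdIterate monotone_const hX hε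
  have hNb := ae_vnorm_sgdIterate_le (v₀ := 0) (μ := μ) hα.le hαc hXb hεb
  have hNind := indepFun_sgdIterate (α := α) (v₀ := 0) hX hε hind (Or.inr rfl)
  have hmean : ∀ k i, ∫ ω, sgdIterate α X ε 0 k ω i ∂μ = 0 := by
    intro k
    induction k with
    | zero => simp [sgdIterate]
    | succ k ih =>
      exact integral_sgdStep_sub_smul_apply_eq_zero hα.le hαc (hNind k) (hN k) (hX _) (hε _)
        (hNb k) (hXb _) (hεb _) ih (hε0 _)
  have hstep : ∀ k, ∫ ω, vnorm (sgdIterate α X ε 0 (k + 1) ω) ^ 2 ∂μ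
      ≤ (1 - a * α) * ∫ ω, vnorm (sgdIterate α X ε 0 k ω) ^ 2 ∂μ + α ^ 2 * Ce ^ 2 := fun k =>
    integral_vnorm_sq_sgdStep_sub_smul_le hα.le hαc hmin (hNind k) (hN k) (hX _) (hε _) (hNb k)
      (hXb _) (hεb _) (hΦ k) (hmean k)
  calc ∫ ω, vnorm (sgdIterate α X ε 0 k ω) ^ 2 ∂μ ≤ α ^ 2 * Ce ^ 2 / (a * α) :=
        le_div_of_le_one_sub_mul_add
          (u := fun k => ∫ ω, vnorm (sgdIterate α X ε 0 k ω) ^ 2 ∂μ) (mul_pos ha hα) haα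
          (by simp [sgdIterate, vnorm]; positivity) hstep k
    _ = Ce ^ 2 * (α / a) := by field_simp

end SecondMoments

theorem stmt_13_general {d : ℕ} (c a α Ceps : ℝ) (hc : 0 < c) (ha : 0 < a) (hCeps : 0 ≤ Ceps)
    (hα : 0 < α) (hα' : α ≤ 1 / c ^ 2)
    (Φ : Matrix (Fin d) (Fin d) ℝ)
    (hmin : ∀ u : Fin d → ℝ, a * vnorm u ^ 2 ≤ u ⬝ᵥ Φ.mulVec u)
    {Ω : Type*} [MeasurableSpace Ω] (μ : Measure Ω) [IsProbabilityMeasure μ]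
    (X : ℕ → Ω → Fin d → ℝ) (ε : ℕ → Ω → Fin d → ℝ)
    (hXmeas : ∀ k, Measurable (X k)) (hεmeas : ∀ k, Measurable (ε k))
    (hindep : iIndepFun (fun k ω => (X k ω, ε k ω)) μ)
    (hident : ∀ k, IdentDistrib (fun ω => (X k ω, ε k ω)) (fun ω => (X 1 ω, ε 1 ω)) μ μ)
    (hXbdd : ∀ k, ∀ᵐ ω ∂μ, vnorm (X k ω) ≤ c)
    (hXΦ : ∀ i j, ∫ ω, X 1 ω i * X 1 ω j ∂μ = Φ i j)
    (hεbdd : ∀ k, ∀ᵐ ω ∂μ, vnorm (ε k ω) ≤ Ceps)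
    (hεcentered : ∀ k i, ∫ ω, ε k ω i ∂μ = 0)
    (θstar θ0 : Fin d → ℝ)
    (θ : ℕ → Ω → Fin d → ℝ)
    (hθ0 : ∀ ω, θ 0 ω = θ0)
    (hrec : ∀ k ω,
      θ (k + 1) ω - θstar
        = ((1 : Matrix (Fin d) (Fin d) ℝ)
            - α • vecMulVec (X (k + 1) ω) (X (k + 1) ω)).mulVec (θ k ω - θstar)
          - α • ε (k + 1) ω) :
    ∀ k : ℕ,
      Real.sqrt (∫ ω, vnorm (θ k ω - θstar) ^ 2 ∂μ)
        ≤ Real.exp (-(a * α * k) / 2) * vnorm (θ0 - θstar)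
          + Ceps * Real.sqrt (α / a) := by
  -- `a * α ≤ 1` is tested on a basis vector, so `d = 0` (where all norms vanish) is separate.
  rcases Nat.eq_zero_or_pos d with rfl | hd
  · intro k
    simp [vnorm]
    positivity
  have hαc : α * c ^ 2 ≤ 1 := by rwa [le_div_iff₀ (by positivity)] at hα'
  have hΦ : ∀ k i j, ∫ ω, X (k + 1) ω i * X (k + 1) ω j ∂μ = Φ i j := fun k i j =>
    ((hident (k + 1)).comp (measurable_fst.eval.mul measurable_fst.eval)).integral_eq.trans
      (hXΦ i j)
  have haα : a * α ≤ 1 := by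
    nlinarith [le_sq_of_forall_mul_vnorm_sq_le ⟨0, hd⟩ hmin (hXmeas 1) (hXbdd 1) hXΦ]
  intro k
  have hsplit : ∀ ω, θ k ω - θstar
      = sgdIterate α X 0 (θ0 - θstar) k ω + sgdIterate α X ε 0 k ω := fun ω =>
    (sub_eq_sgdIterate (by simp [hθ0]) hrec k ω).trans (sgdIterate_eq_add k ω)
  simp_rw [hsplit]
  refine (sqrt_integral_vnorm_add_sq_le (measurable_sgdIterate monotone_const hXmeas
    (fun _ => measurable_const) k) (measurable_sgdIterate monotone_const hXmeas hεmeas k)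
    (ae_vnorm_sgdIterate_le (Ce := 0) hα.le hαc hXbdd
      (fun _ => ae_of_all _ fun _ => by simp [vnorm]) k)
    (ae_vnorm_sgdIterate_le hα.le hαc hXbdd hεbdd k)).trans (add_le_add ?_ ?_)
  · refine (Real.sqrt_le_sqrt (integral_vnorm_sq_sgdIterate_bias_le hα.le hαc hmin hXmeas hεmeas
      hindep hXbdd hΦ _ k)).trans_eq ?_
    rw [Real.sqrt_mul (Real.exp_pos _).le, Real.sqrt_sq (vnorm_nonneg _), ← Real.exp_half]
  · refine (Real.sqrt_le_sqrt (integral_vnorm_sq_sgdIterate_noise_le ha hα haα hαc hmin hXmeas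
      hεmeas hindep hXbdd hεbdd hεcentered hΦ k)).trans_eq ?_
    rw [Real.sqrt_mul (sq_nonneg _), Real.sqrt_sq hCeps]

/-- For the SGD recursion
`θ_k − θ* = (I − αX_kX_kᵀ)(θ_{k−1} − θ*) − αε_k` with i.i.d. data `(X_k, ε_k)`,
bounded features and bounded centered noise, it holds that
`E[‖θ_k − θ*‖²]^{1/2} ≤ exp(−aαk/2)‖θ₀ − θ*‖ + ‖ε‖_∞ √(α/a)`. -/
theorem stmt_13 {d : ℕ} (c a α Ceps : ℝ) (hc : 0 < c) (ha : 0 < a) (hCeps : 0 ≤ Ceps)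
    (hα : 0 < α) (hα' : α ≤ 1 / c ^ 2)
    (Φ : Matrix (Fin d) (Fin d) ℝ) (hΦpd : Φ.PosDef)
    (hmin : ∀ u : Fin d → ℝ, a * vnorm u ^ 2 ≤ u ⬝ᵥ Φ.mulVec u)
    {Ω : Type*} [MeasurableSpace Ω] (μ : Measure Ω) [IsProbabilityMeasure μ]
    (X : ℕ → Ω → Fin d → ℝ) (ε : ℕ → Ω → Fin d → ℝ)
    (hXmeas : ∀ k, Measurable (X k)) (hεmeas : ∀ k, Measurable (ε k))
    (hindep : iIndepFun (fun k ω => (X k ω, ε k ω)) μ)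
    (hident : ∀ k, IdentDistrib (fun ω => (X k ω, ε k ω)) (fun ω => (X 1 ω, ε 1 ω)) μ μ)
    (hXbdd : ∀ k, ∀ᵐ ω ∂μ, vnorm (X k ω) ≤ c)
    (hXΦ : ∀ i j, ∫ ω, X 1 ω i * X 1 ω j ∂μ = Φ i j)
    (hεbdd : ∀ k, ∀ᵐ ω ∂μ, vnorm (ε k ω) ≤ Ceps)
    (hεcentered : ∀ k i, ∫ ω, ε k ω i ∂μ = 0)
    (θstar θ0 : Fin d → ℝ)
    (θ : ℕ → Ω → Fin d → ℝ)
    (hθ0 : ∀ ω, θ 0 ω = θ0)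
    (hrec : ∀ k ω,
      θ (k + 1) ω - θstar
        = ((1 : Matrix (Fin d) (Fin d) ℝ)
            - α • vecMulVec (X (k + 1) ω) (X (k + 1) ω)).mulVec (θ k ω - θstar)
          - α • ε (k + 1) ω) :
    ∀ k : ℕ,
      Real.sqrt (∫ ω, vnorm (θ k ω - θstar) ^ 2 ∂μ)
        ≤ Real.exp (-(a * α * k) / 2) * vnorm (θ0 - θstar)
          + Ceps * Real.sqrt (α / a) :=
  stmt_13_general c a α Ceps hc ha hCeps hα hα' Φ hmin μ X ε hXmeas hεmeas hindep hident hXbdd hXΦ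
    hεbdd hεcentered θstar θ0 θ hθ0 hrec
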